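/- arXiv:2402.00597 — 5 statements merged into one kernel-verified Lean document; each statement's English description precedes it below -/
import Mathlib

section
/- Let s be a positive integer, let γ_1,…,γ_s be pairwise distinct real numbers with 0 < γ_k < 1, let φ_1,…,φ_s be real numbers with 0 < φ_k < π, and let c_{k1}, c_{k2} (1 ≤ k ≤ s) be real numbers. Then Σ_{k=1}^s γ_k^j [c_{k1} cos(j φ_k) + c_{k2} sin(j φ_k)] = 0 holds for every positive integer j if and only if c_{k1} = c_{k2} = 0 for all 1 ≤ k ≤ s. -/
/-!
Write the `j`-th term as `Re ((c₁ - c₂ i) z ^ j)` with `z = γ e^{iφ}`. The nodes `z_k` have distinct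
moduli and lie in the open upper half-plane, so together with their conjugates they form `2s`
distinct nonzero numbers; the hypothesis then says that a Vandermonde system in these nodes
annihilates the coefficients `c₁ - c₂ i` and their conjugates, which forces them to vanish.
-/

open Complex ComplexConjugate

theorem eq_zero_of_forall_sum_mul_pow_succ_eq_zero {R ι : Type*} [CommRing R] [IsDomain R]
    [Fintype ι] {w b : ι → R} (hw : Function.Injective w) (hw0 : ∀ i, w i ≠ 0)
    (h : ∀ n : ℕ, ∑ i, b i * w i ^ (n + 1) = 0) : b = 0 := by
  let e := Fintype.equivFin ι
  have hbw : (fun i => b i * w i) ∘ e.symm = 0 := by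
    refine Matrix.eq_zero_of_forall_pow_sum_mul_pow_eq_zero (hw.comp e.symm.injective) fun n => ?_
    rw [← h n, ← e.symm.sum_comp]
    exact Finset.sum_congr rfl fun i _ => by simp only [Function.comp_apply]; ring
  funext i
  simpa [hw0 i] using congrFun hbw (e i)

theorem Complex.eq_zero_of_forall_sum_re_mul_pow_succ_eq_zero {ι : Type*} [Fintype ι]
    {w b : ι → ℂ} (hw : Function.Injective w) (him : ∀ i, 0 < (w i).im)
    (h : ∀ n : ℕ, ∑ i, (b i * w i ^ (n + 1)).re = 0) : b = 0 := by
  have hw0 i : w i ≠ 0 := fun h0 => by simpa [h0] using him i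
  have hconj : Function.Injective (Sum.elim w (conj ∘ w)) := by
    refine hw.sumElim (star_injective.comp hw) fun i k hik => ?_
    have := congrArg im hik
    simp only [Function.comp_apply, conj_im] at this
    linarith [him i, him k]
  have hb := eq_zero_of_forall_sum_mul_pow_succ_eq_zero (b := Sum.elim b (conj ∘ b)) hconj
    (by rintro (i | i) <;> simp [hw0 i])
    fun n => by
      simp only [Fintype.sum_sum_type, Sum.elim_inl, Sum.elim_inr, Function.comp_apply,
        ← map_pow, ← map_mul, ← Finset.sum_add_distrib, add_conj]
      rw [← ofReal_sum, ← Finset.mul_sum, h n, mul_zero, ofReal_zero]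
  funext i
  exact congrFun hb (Sum.inl i)

theorem Complex.re_mul_ofReal_mul_exp_mul_I_pow (a c r θ : ℝ) (n : ℕ) :
    ((a - c * I) * (r * exp (θ * I)) ^ n).re =
      r ^ n * (a * Real.cos (n * θ) + c * Real.sin (n * θ)) := by
  have hpow : (r * exp (θ * I)) ^ n = (r ^ n : ℝ) * exp ((n * θ : ℝ) * I) := by
    rw [mul_pow, ← exp_nat_mul]
    push_cast
    ring_nf
  rw [hpow, exp_mul_I, ← ofReal_cos, ← ofReal_sin]
  simp only [mul_re, mul_im, sub_re, sub_im, add_re, add_im, ofReal_re, ofReal_im, I_re, I_im]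
  ring

theorem Complex.im_ofReal_mul_exp_mul_I (r θ : ℝ) : (r * exp (θ * I)).im = r * Real.sin θ := by
  simp [exp_mul_I, ← ofReal_cos, ← ofReal_sin]

theorem stmt_1_general (s : ℕ) (gam phi : Fin s → ℝ)
    (hgam : ∀ k, 0 < gam k ∧ gam k < 1)
    (hphi : ∀ k, 0 < phi k ∧ phi k < Real.pi)
    (hinj : Function.Injective gam) (c1 c2 : Fin s → ℝ) :
    (∀ j : ℕ, 0 < j →
        ∑ k, gam k ^ j * (c1 k * Real.cos (j * phi k) + c2 k * Real.sin (j * phi k)) = 0) ↔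
      ∀ k, c1 k = 0 ∧ c2 k = 0 := by
  refine ⟨fun h => ?_, fun h j _ => Finset.sum_eq_zero fun k _ => by simp [h k]⟩
  let z k : ℂ := gam k * exp (phi k * I)
  have hnorm k : ‖z k‖ = gam k := by
    simp [z, norm_exp_ofReal_mul_I, abs_of_pos (hgam k).1]
  have hb := Complex.eq_zero_of_forall_sum_re_mul_pow_succ_eq_zero (w := z)
    (b := fun k => c1 k - c2 k * I)
    (fun k l hkl => hinj <| by rw [← hnorm k, ← hnorm l, hkl])
    (fun k => by
      rw [im_ofReal_mul_exp_mul_I]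
      exact mul_pos (hgam k).1 (Real.sin_pos_of_pos_of_lt_pi (hphi k).1 (hphi k).2))
    (fun n => by
      simpa only [z, re_mul_ofReal_mul_exp_mul_I_pow] using h (n + 1) n.succ_pos)
  intro k
  have hk := congrFun hb k
  simp only [Pi.zero_apply, Complex.ext_iff, sub_re, sub_im, mul_re, mul_im, ofReal_re,
    ofReal_im, I_re, I_im, zero_re, zero_im] at hk
  constructor <;> linarith [hk.1, hk.2]

/-- For pairwise distinct `γ_k ∈ (0,1)` and `φ_k ∈ (0,π)`,
`∑_{k=1}^s γ_k^j [c_{k1} cos(jφ_k) + c_{k2} sin(jφ_k)] = 0` for every positive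
integer `j` iff all `c_{k1} = c_{k2} = 0`. -/
theorem stmt_1 (s : ℕ) (hs : 0 < s) (gam phi : Fin s → ℝ)
    (hgam : ∀ k, 0 < gam k ∧ gam k < 1)
    (hphi : ∀ k, 0 < phi k ∧ phi k < Real.pi)
    (hinj : Function.Injective gam) (c1 c2 : Fin s → ℝ) :
    (∀ j : ℕ, 0 < j →
        ∑ k, gam k ^ j * (c1 k * Real.cos (j * phi k) + c2 k * Real.sin (j * phi k)) = 0) ↔
      ∀ k, c1 k = 0 ∧ c2 k = 0 :=
  stmt_1_general s gam phi hgam hphi hinj c1 c2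
end

section
/- Let φ_1, φ_2 be real numbers with 0 < φ_1 < π and 0 < φ_2 < π, and let c_{11}, c_{12}, c_{21}, c_{22} be real numbers with (c_{11}, c_{12}) ≠ (0, 0). Then c_{11} cos(j φ_1) + c_{12} sin(j φ_1) = c_{21} cos(j φ_2) + c_{22} sin(j φ_2) holds for every positive integer j if and only if φ_1 = φ_2, c_{11} = c_{21} and c_{12} = c_{22}. -/
/-!
Both sides are solutions of the recurrence `s (j + 2) + s j = 2 cos φ · s (j + 1)`. If
`cos φ₁ ≠ cos φ₂`, subtracting the two recurrences forces the common sequence to vanish from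
`j = 2` on; two consecutive zeros kill the coefficients, because the matrix of
`(cos x, sin x)` and `(cos (x + φ), sin (x + φ))` has determinant `sin φ ≠ 0`. Otherwise
`φ₁ = φ₂` and the same determinant argument, applied to the difference at `j = 1, 2`, gives
equal coefficients.
-/

open Real

noncomputable section

def trigComb (c d x : ℝ) : ℝ := c * cos x + d * sin x

theorem trigComb_sub (c d c' d' x : ℝ) :
    trigComb c d x - trigComb c' d' x = trigComb (c - c') (d - d') x := by
  unfold trigComb; ring

theorem trigComb_chebyshev_recurrence (c d φ : ℝ) (n : ℕ) :
    trigComb c d ((n + 2 : ℕ) * φ) + trigComb c d (n * φ) =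
      2 * cos φ * trigComb c d ((n + 1 : ℕ) * φ) := by
  have hnext : ((n + 2 : ℕ) : ℝ) * φ = (n + 1 : ℕ) * φ + φ := by push_cast; ring
  have hprev : (n : ℝ) * φ = (n + 1 : ℕ) * φ - φ := by push_cast; ring
  rw [hnext, hprev]
  unfold trigComb
  rw [cos_add, cos_sub, sin_add, sin_sub]
  ring

theorem eq_zero_of_trigComb_eq_zero {c d x φ : ℝ} (hφ : sin φ ≠ 0)
    (h₀ : trigComb c d x = 0) (h₁ : trigComb c d (x + φ) = 0) : c = 0 ∧ d = 0 := by
  unfold trigComb at h₀ h₁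
  have hdet : sin φ = sin (x + φ) * cos x - cos (x + φ) * sin x := by
    rw [← sin_sub, add_sub_cancel_left]
  have hc : c * sin φ = 0 := by
    rw [hdet]; linear_combination sin (x + φ) * h₀ - sin x * h₁
  have hd : d * sin φ = 0 := by
    rw [hdet]; linear_combination cos x * h₁ - cos (x + φ) * h₀
  exact ⟨(mul_eq_zero.1 hc).resolve_right hφ, (mul_eq_zero.1 hd).resolve_right hφ⟩

theorem trigComb_eq_zero_of_cos_ne {c d c' d' φ ψ : ℝ}
    (h : ∀ j : ℕ, 0 < j → trigComb c d (j * φ) = trigComb c' d' (j * ψ))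
    (hcos : cos φ ≠ cos ψ) (n : ℕ) : trigComb c d ((n + 2 : ℕ) * φ) = 0 := by
  have hrec := trigComb_chebyshev_recurrence c d φ (n + 1)
  have hrec' := trigComb_chebyshev_recurrence c' d' ψ (n + 1)
  have hprod : 2 * (cos φ - cos ψ) * trigComb c d ((n + 2 : ℕ) * φ) = 0 := by
    linear_combination -hrec + hrec' + h (n + 3) (by omega) + h (n + 1) (by omega)
      - 2 * cos ψ * h (n + 2) (by omega)
  simpa [sub_eq_zero, hcos] using hprod

/-- For `φ_1, φ_2 ∈ (0,π)` and `(c_{11}, c_{12}) ≠ (0,0)`,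
`c_{11} cos(jφ_1) + c_{12} sin(jφ_1) = c_{21} cos(jφ_2) + c_{22} sin(jφ_2)` for
every positive integer `j` iff `φ_1 = φ_2`, `c_{11} = c_{21}` and `c_{12} = c_{22}`. -/
theorem stmt_2 (phi1 phi2 : ℝ)
    (h1 : 0 < phi1 ∧ phi1 < Real.pi) (h2 : 0 < phi2 ∧ phi2 < Real.pi)
    (c11 c12 c21 c22 : ℝ) (hc : ¬(c11 = 0 ∧ c12 = 0)) :
    (∀ j : ℕ, 0 < j →
        c11 * Real.cos (j * phi1) + c12 * Real.sin (j * phi1) =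
          c21 * Real.cos (j * phi2) + c22 * Real.sin (j * phi2)) ↔
      (phi1 = phi2 ∧ c11 = c21 ∧ c12 = c22) := by
  refine ⟨fun h => ?_, by rintro ⟨rfl, rfl, rfl⟩ _ _; rfl⟩
  change ∀ j : ℕ, 0 < j → trigComb c11 c12 (j * phi1) = trigComb c21 c22 (j * phi2) at h
  have hsin : sin phi1 ≠ 0 := (sin_pos_of_pos_of_lt_pi h1.1 h1.2).ne'
  by_cases hcos : cos phi1 = cos phi2
  · obtain rfl : phi1 = phi2 := injOn_cos ⟨h1.1.le, h1.2.le⟩ ⟨h2.1.le, h2.2.le⟩ hcos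
    have hdiff (j : ℕ) (hj : 0 < j) : trigComb (c11 - c21) (c12 - c22) (j * phi1) = 0 := by
      rw [← trigComb_sub, h j hj, sub_self]
    have hφ := hdiff 1 one_pos
    have h2φ := hdiff 2 two_pos
    rw [Nat.cast_one, one_mul] at hφ
    rw [Nat.cast_ofNat, two_mul] at h2φ
    obtain ⟨h11, h12⟩ := eq_zero_of_trigComb_eq_zero hsin hφ h2φ
    exact ⟨rfl, sub_eq_zero.1 h11, sub_eq_zero.1 h12⟩
  · have h2φ := trigComb_eq_zero_of_cos_ne h hcos 0
    have h3φ := trigComb_eq_zero_of_cos_ne h hcos 1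
    rw [show ((1 + 2 : ℕ) : ℝ) * phi1 = (0 + 2 : ℕ) * phi1 + phi1 by push_cast; ring] at h3φ
    exact absurd (eq_zero_of_trigComb_eq_zero hsin h2φ h3φ) hc

end
end

section
/- Assume in addition that λ_1,…,λ_r are pairwise distinct and γ_1,…,γ_s are pairwise distinct. If Φ_i is the m×m zero matrix for every integer i ≥ 1, then G_{0,k} = 0 for all 1 ≤ k ≤ r and G_{1,k} = G_{2,k} = 0 for all 1 ≤ k ≤ s. -/
/-!
Reading off a fixed entry `(x, y)`, the hypothesis says that a real exponential polynomial
`∑ a_k λ_k^n + ∑ γ_k^n (b_k cos nφ_k + c_k sin nφ_k)` vanishes for all `n ≥ 0`. Writing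
`w_k = γ_k e^{iφ_k}`, the oscillating terms are `Re((b_k - i c_k) w_k^n)
= ((b_k - i c_k) w_k^n + (b_k + i c_k) w̄_k^n) / 2`, so the sequence is a complex linear
combination of `n ↦ z^n` over the nodes `λ_k`, `w_k`, `w̄_k`. These nodes are pairwise distinct
(the `λ_k` are real, the `w_k` lie in the open upper half plane, and `|w_k| = γ_k`), so
the Vandermonde determinant forces every coefficient to vanish.
-/

open Complex ComplexConjugate

theorem Fintype.eq_zero_of_forall_sum_mul_pow_eq_zero {ι R : Type*} [Fintype ι] [CommRing R]
    [IsDomain R] {z c : ι → R} (hz : Function.Injective z)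
    (h : ∀ n : ℕ, ∑ i, c i * z i ^ n = 0) : c = 0 := by
  let e := Fintype.equivFin ι
  have hc : c ∘ e.symm = 0 :=
    Matrix.eq_zero_of_forall_pow_sum_mul_pow_eq_zero (hz.comp e.symm.injective) fun n => by
      rw [← h n]
      exact e.symm.sum_comp fun i => c i * z i ^ (n : ℕ)
  funext i
  simpa using congrFun hc (e i)

theorem eq_zero_of_forall_sum_mul_pow_add_sum_re_eq_zero {ι κ : Type*} [Fintype ι] [Fintype κ]
    {x a : ι → ℝ} {w c : κ → ℂ} (hx : Function.Injective x) (hw : Function.Injective w)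
    (hw_im : ∀ k, 0 < (w k).im)
    (h : ∀ n : ℕ, ∑ i, a i * x i ^ n + ∑ k, (c k * w k ^ n).re = 0) : a = 0 ∧ c = 0 := by
  set z : ι ⊕ κ ⊕ κ → ℂ :=
    Sum.elim (fun i => (x i : ℂ)) (Sum.elim w fun k => conj (w k))
  set d : ι ⊕ κ ⊕ κ → ℂ :=
    Sum.elim (fun i => (a i : ℂ)) (Sum.elim (fun k => c k / 2) fun k => conj (c k) / 2)
  have hz : Function.Injective z := by
    have hw_ne_conj : ∀ j k, w j ≠ conj (w k) := fun j k he => by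
      have := congrArg im he
      simp only [conj_im] at this
      linarith [hw_im j, hw_im k]
    refine (ofReal_injective.comp hx).sumElim
      (hw.sumElim ((starRingEnd ℂ).injective.comp hw) hw_ne_conj) ?_
    rintro i (k | k) he <;> have := congrArg im he <;>
      simp only [Function.comp_apply, Sum.elim_inl, Sum.elim_inr, ofReal_im, conj_im] at this <;>
      linarith [hw_im k]
  have hd : d = 0 := by
    refine Fintype.eq_zero_of_forall_sum_mul_pow_eq_zero hz fun n => ?_
    have hre : ∀ k, c k / 2 * w k ^ n + conj (c k) / 2 * conj (w k) ^ n
        = ((c k * w k ^ n).re : ℂ) := by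
      intro k
      rw [re_eq_add_conj, map_mul, map_pow]
      ring
    simp only [z, d, Fintype.sum_sum_type, Sum.elim_inl, Sum.elim_inr,
      ← Finset.sum_add_distrib, hre]
    exact_mod_cast h n
  refine ⟨funext fun i => ?_, funext fun k => ?_⟩
  · simpa [d] using congrFun hd (.inl i)
  · simpa [d] using congrFun hd (.inr (.inl k))

theorem re_mul_pow_ofReal_mul_exp (γ φ b c : ℝ) (n : ℕ) :
    ((b - c * I) * (γ * exp (φ * I)) ^ n).re =
      γ ^ n * (Real.cos (n * φ) * b + Real.sin (n * φ) * c) := by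
  rw [mul_pow, ← exp_nat_mul, show (n : ℂ) * (φ * I) = (n * φ : ℝ) * I by push_cast; ring,
    exp_mul_I, ← ofReal_pow, ← ofReal_cos, ← ofReal_sin]
  simp only [mul_re, sub_re, sub_im, mul_im, ofReal_re, ofReal_im, add_re, add_im, I_re, I_im]
  ring

/-- The coefficient matrix `Φ_i` of the proposed multivariate GARCH model, for `i ≥ 1`:
`Φ_i = ∑_{k=1}^r λ_k^{i−1} G_{0,k}
  + ∑_{k=1}^s γ_k^{i−1} [cos((i−1)φ_k) G_{1,k} + sin((i−1)φ_k) G_{2,k}]`. -/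
noncomputable def PhiMat (m r s : ℕ) (lam : Fin r → ℝ) (gam phi : Fin s → ℝ)
    (G0 : Fin r → Matrix (Fin m) (Fin m) ℝ)
    (G1 G2 : Fin s → Matrix (Fin m) (Fin m) ℝ) (i : ℕ) :
    Matrix (Fin m) (Fin m) ℝ :=
  (∑ k, lam k ^ (i - 1) • G0 k) +
    ∑ k, gam k ^ (i - 1) •
      (Real.cos ((i - 1 : ℕ) * phi k) • G1 k + Real.sin ((i - 1 : ℕ) * phi k) • G2 k)

theorem PhiMat_succ_apply (m r s : ℕ) (lam : Fin r → ℝ) (gam phi : Fin s → ℝ)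
    (G0 : Fin r → Matrix (Fin m) (Fin m) ℝ) (G1 G2 : Fin s → Matrix (Fin m) (Fin m) ℝ)
    (n : ℕ) (x y : Fin m) :
    PhiMat m r s lam gam phi G0 G1 G2 (n + 1) x y = ∑ k, G0 k x y * lam k ^ n +
      ∑ k, ((G1 k x y - G2 k x y * I) * (gam k * exp (phi k * I)) ^ n).re := by
  simp only [PhiMat, re_mul_pow_ofReal_mul_exp, Nat.add_sub_cancel, Matrix.add_apply,
    Matrix.sum_apply, Matrix.smul_apply, smul_eq_mul, mul_comm (G0 _ x y)]

theorem stmt_7_general (m r s : ℕ)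
    (lam : Fin r → ℝ) (gam phi : Fin s → ℝ)
    (G0 : Fin r → Matrix (Fin m) (Fin m) ℝ)
    (G1 G2 : Fin s → Matrix (Fin m) (Fin m) ℝ)
    (hgam0 : ∀ k, 0 < gam k)
    (hphi : ∀ k, 0 < phi k ∧ phi k < Real.pi)
    (hlaminj : Function.Injective lam) (hgaminj : Function.Injective gam)
    (hzero : ∀ i : ℕ, 1 ≤ i → PhiMat m r s lam gam phi G0 G1 G2 i = 0) :
    (∀ k, G0 k = 0) ∧ ∀ k, G1 k = 0 ∧ G2 k = 0 := by
  set w : Fin s → ℂ := fun k => gam k * exp (phi k * I)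
  have hw_norm : ∀ k, ‖w k‖ = gam k := fun k => by
    simp [w, norm_exp_ofReal_mul_I, abs_of_pos (hgam0 k)]
  have hw : Function.Injective w := fun j k he =>
    hgaminj <| by rw [← hw_norm j, ← hw_norm k, he]
  have hw_im : ∀ k, 0 < (w k).im := fun k => by
    simpa [w, exp_ofReal_mul_I_im] using
      mul_pos (hgam0 k) (Real.sin_pos_of_pos_of_lt_pi (hphi k).1 (hphi k).2)
  have hentry (x y : Fin m) := eq_zero_of_forall_sum_mul_pow_add_sum_re_eq_zero hlaminj hw hw_im
    (a := fun k => G0 k x y) (c := fun k => G1 k x y - G2 k x y * I) fun n => by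
      rw [← PhiMat_succ_apply, hzero (n + 1) n.succ_pos, Matrix.zero_apply]
  refine ⟨fun k => ?_, fun k => ⟨?_, ?_⟩⟩ <;> ext x y
  · exact congrFun (hentry x y).1 k
  · simpa using congrArg re (congrFun (hentry x y).2 k)
  · simpa using congrArg im (congrFun (hentry x y).2 k)

/-- if `Φ_i = 0` for every `i ≥ 1`, then all coefficient matrices vanish. -/
theorem stmt_7 (m r s : ℕ) (hm : 0 < m)
    (lam : Fin r → ℝ) (gam phi : Fin s → ℝ)
    (G0 : Fin r → Matrix (Fin m) (Fin m) ℝ)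
    (G1 G2 : Fin s → Matrix (Fin m) (Fin m) ℝ)
    (hlam0 : ∀ k, 0 < |lam k|) (hlam1 : ∀ k, |lam k| < 1)
    (hgam0 : ∀ k, 0 < gam k) (hgam1 : ∀ k, gam k < 1)
    (hphi : ∀ k, 0 < phi k ∧ phi k < Real.pi)
    (hlaminj : Function.Injective lam) (hgaminj : Function.Injective gam)
    (hzero : ∀ i : ℕ, 1 ≤ i → PhiMat m r s lam gam phi G0 G1 G2 i = 0) :
    (∀ k, G0 k = 0) ∧ ∀ k, G1 k = 0 ∧ G2 k = 0 :=
  stmt_7_general m r s lam gam phi G0 G1 G2 hgam0 hphi hlaminj hgaminj hzero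
end

section
/- Assume that λ_1,…,λ_r are pairwise distinct, γ_1,…,γ_s are pairwise distinct, λ′_1,…,λ′_{r′} are pairwise distinct, γ′_1,…,γ′_{s′} are pairwise distinct, and that all of the matrices G_{0,k} (1 ≤ k ≤ r), G_{1,k}, G_{2,k} (1 ≤ k ≤ s), G′_{0,k} (1 ≤ k ≤ r′), G′_{1,k}, G′_{2,k} (1 ≤ k ≤ s′) are nonzero. If Φ_i = Φ′_i for every integer i ≥ 1, then r = r′ and s = s′ (this is the identifiability of the order (r, s), the core of Proposition 1(i)). -/
theorem linearIndependent_pow_seq (K : Type*) [Field K] :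
    LinearIndependent K (fun μ : K => fun n : ℕ => μ ^ n) := by
  refine Module.End.eigenvectors_linearIndependent' (LinearMap.funLeft K K Nat.succ) id
    Function.injective_id _ fun μ => ⟨?_, fun h => by simpa using congrFun h 0⟩
  rw [Module.End.mem_eigenspace_iff]
  ext n
  simp [LinearMap.funLeft_apply, pow_succ']

theorem exists_eq_of_sum_mul_pow_eq {K ι κ : Type*} [Field K] [Fintype ι] [Fintype κ]
    {μ c : ι → K} {ν d : κ → K} (h : ∀ n : ℕ, ∑ i, c i * μ i ^ n = ∑ j, d j * ν j ^ n)
    {i₀ : ι} (hc : c i₀ ≠ 0) (hμ : ∀ i, μ i = μ i₀ → i = i₀) : ∃ j, ν j = μ i₀ := by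
  classical
  by_contra! hν
  set l : K →₀ K := ∑ i, Finsupp.single (μ i) (c i) - ∑ j, Finsupp.single (ν j) (d j)
  have hl : Finsupp.linearCombination K (fun μ : K => fun n : ℕ => μ ^ n) l = 0 := by
    ext n
    simp [l, map_sum, Finsupp.linearCombination_single, h n]
  have hμ' : ∀ i, μ i = μ i₀ ↔ i = i₀ := fun i => ⟨hμ i, by rintro rfl; rfl⟩
  have hl_apply : l (μ i₀) = c i₀ := by simp [l, Finsupp.single_apply, hν, hμ']
  rw [linearIndependent_iff.1 (linearIndependent_pow_seq K) l hl] at hl_apply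
  exact hc hl_apply.symm

theorem Fin.eq_of_range_eq {α : Type*} {n n' : ℕ} {f : Fin n → α} {g : Fin n' → α}
    (hf : Function.Injective f) (hg : Function.Injective g) (h : Set.range f = Set.range g) :
    n = n' := by
  simpa [Nat.card_range_of_injective hf, Nat.card_range_of_injective hg] using
    congrArg (fun S : Set α => Nat.card S) h

open Complex

theorem ofReal_pow_mul_cos_add_sin (g p x y : ℝ) (n : ℕ) :
    ((g ^ n * (Real.cos (n * p) * x + Real.sin (n * p) * y) : ℝ) : ℂ) =
      (x - y * I) / 2 * (g * exp (p * I)) ^ n + (x + y * I) / 2 * (g * exp (-p * I)) ^ n := by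
  have hpow : ∀ q : ℝ, exp (q * I) ^ n = Real.cos (n * q) + Real.sin (n * q) * I := fun q => by
    rw [← exp_nat_mul, ← mul_assoc, exp_mul_I]
    push_cast
    ring_nf
  have hneg := hpow (-p)
  push_cast at hneg
  rw [mul_pow, mul_pow, hpow, hneg, mul_neg, Complex.cos_neg, Complex.sin_neg]
  push_cast
  linear_combination ((g : ℂ) ^ n * y * Complex.sin (n * p)) * I_sq

namespace PhiMat

variable {m r s : ℕ}

noncomputable def node (lam : Fin r → ℝ) (gam phi : Fin s → ℝ) : Fin r ⊕ Fin s ⊕ Fin s → ℂ :=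
  Sum.elim (fun k => lam k)
    (Sum.elim (fun k => gam k * exp (phi k * I)) (fun k => gam k * exp (-phi k * I)))

noncomputable def weight (G0 : Fin r → Matrix (Fin m) (Fin m) ℝ)
    (G1 G2 : Fin s → Matrix (Fin m) (Fin m) ℝ) (a b : Fin m) : Fin r ⊕ Fin s ⊕ Fin s → ℂ :=
  Sum.elim (fun k => G0 k a b)
    (Sum.elim (fun k => (G1 k a b - G2 k a b * I) / 2) (fun k => (G1 k a b + G2 k a b * I) / 2))

theorem ofReal_succ_apply (lam : Fin r → ℝ) (gam phi : Fin s → ℝ)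
    (G0 : Fin r → Matrix (Fin m) (Fin m) ℝ) (G1 G2 : Fin s → Matrix (Fin m) (Fin m) ℝ)
    (n : ℕ) (a b : Fin m) :
    (PhiMat m r s lam gam phi G0 G1 G2 (n + 1) a b : ℂ) =
      ∑ t, weight G0 G1 G2 a b t * node lam gam phi t ^ n := by
  simp only [PhiMat, Nat.add_sub_cancel, Matrix.add_apply, Matrix.sum_apply, Matrix.smul_apply,
    smul_eq_mul, Fintype.sum_sum_type, weight, node, Sum.elim_inl, Sum.elim_inr, ofReal_add,
    ofReal_sum, ← Finset.sum_add_distrib]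
  congr 1
  · exact Finset.sum_congr rfl fun k _ => by push_cast; ring
  · exact Finset.sum_congr rfl fun k _ => ofReal_pow_mul_cos_add_sin ..

variable {lam : Fin r → ℝ} {gam phi : Fin s → ℝ}

theorem im_node_inr_inl_pos (hgam : ∀ k, 0 < gam k) (hphi : ∀ k, 0 < phi k ∧ phi k < Real.pi)
    (k : Fin s) : 0 < (node lam gam phi (.inr (.inl k))).im := by
  simpa [node, exp_ofReal_mul_I_im] using
    mul_pos (hgam k) (Real.sin_pos_of_pos_of_lt_pi (hphi k).1 (hphi k).2)

theorem im_node_inr_inr (k : Fin s) :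
    (node lam gam phi (.inr (.inr k))).im = -(node lam gam phi (.inr (.inl k))).im := by
  simp [node, ← ofReal_neg, exp_ofReal_mul_I_im]

theorem norm_node_inr_inl (hgam : ∀ k, 0 < gam k) (k : Fin s) :
    ‖node lam gam phi (.inr (.inl k))‖ = gam k := by
  simp [node, norm_exp_ofReal_mul_I, abs_of_pos (hgam k)]

theorem exists_inl_of_node_eq_ofReal (hgam : ∀ k, 0 < gam k)
    (hphi : ∀ k, 0 < phi k ∧ phi k < Real.pi) {t : Fin r ⊕ Fin s ⊕ Fin s} {x : ℝ}
    (h : node lam gam phi t = x) : ∃ k, t = .inl k ∧ lam k = x := by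
  have him := congrArg im h
  rw [ofReal_im] at him
  rcases t with k | k | k
  · exact ⟨k, rfl, ofReal_injective h⟩
  · exact absurd him (im_node_inr_inl_pos hgam hphi k).ne'
  · rw [im_node_inr_inr] at him
    linarith [im_node_inr_inl_pos (lam := lam) hgam hphi k]

theorem exists_inr_inl_of_node_eq (hgam : ∀ k, 0 < gam k)
    (hphi : ∀ k, 0 < phi k ∧ phi k < Real.pi) {t : Fin r ⊕ Fin s ⊕ Fin s} {z : ℂ}
    (hz : 0 < z.im) (h : node lam gam phi t = z) : ∃ k, t = .inr (.inl k) ∧ gam k = ‖z‖ := by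
  rcases t with k | k | k
  · simp [node, ← h] at hz
  · exact ⟨k, rfl, by rw [← h, norm_node_inr_inl hgam]⟩
  · rw [← h, im_node_inr_inr] at hz
    linarith [im_node_inr_inl_pos (lam := lam) hgam hphi k]

variable {r' s' : ℕ} {lam' : Fin r' → ℝ}
  {gam' phi' : Fin s' → ℝ} {G0 : Fin r → Matrix (Fin m) (Fin m) ℝ}
  {G1 G2 : Fin s → Matrix (Fin m) (Fin m) ℝ} {G0' : Fin r' → Matrix (Fin m) (Fin m) ℝ}
  {G1' G2' : Fin s' → Matrix (Fin m) (Fin m) ℝ}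

theorem sum_weight_mul_node_pow_eq
    (heq : ∀ i : ℕ, 1 ≤ i →
      PhiMat m r s lam gam phi G0 G1 G2 i = PhiMat m r' s' lam' gam' phi' G0' G1' G2' i)
    (a b : Fin m) (n : ℕ) :
    ∑ t, weight G0 G1 G2 a b t * node lam gam phi t ^ n =
      ∑ t, weight G0' G1' G2' a b t * node lam' gam' phi' t ^ n := by
  rw [← ofReal_succ_apply, ← ofReal_succ_apply, heq (n + 1) (Nat.le_add_left 1 n)]

section

variable (hsum : ∀ a b n, ∑ t, weight G0 G1 G2 a b t * node lam gam phi t ^ n =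
    ∑ t, weight G0' G1' G2' a b t * node lam' gam' phi' t ^ n)
  (hgam : ∀ k, 0 < gam k) (hphi : ∀ k, 0 < phi k ∧ phi k < Real.pi)
  (hgam' : ∀ k, 0 < gam' k) (hphi' : ∀ k, 0 < phi' k ∧ phi' k < Real.pi)
include hsum hgam hphi hgam' hphi'

theorem range_lam_subset (hlam : Function.Injective lam) (hG0 : ∀ k, G0 k ≠ 0) :
    Set.range lam ⊆ Set.range lam' := by
  rintro _ ⟨k, rfl⟩
  obtain ⟨a, b, hab⟩ : ∃ a b, G0 k a b ≠ 0 := by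
    by_contra! h
    exact hG0 k (Matrix.ext h)
  obtain ⟨t, ht⟩ := exists_eq_of_sum_mul_pow_eq (hsum a b) (i₀ := .inl k)
    (by simpa [weight] using hab) fun t h => by
      obtain ⟨k', rfl, hk'⟩ := exists_inl_of_node_eq_ofReal hgam hphi h
      rw [hlam hk']
  obtain ⟨j, -, hj⟩ := exists_inl_of_node_eq_ofReal hgam' hphi' ht
  exact ⟨j, hj⟩

theorem range_gam_subset (hgaminj : Function.Injective gam) (hG1 : ∀ k, G1 k ≠ 0) :
    Set.range gam ⊆ Set.range gam' := by
  rintro _ ⟨k, rfl⟩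
  obtain ⟨a, b, hab⟩ : ∃ a b, G1 k a b ≠ 0 := by
    by_contra! h
    exact hG1 k (Matrix.ext h)
  have hz := im_node_inr_inl_pos (lam := lam) hgam hphi k
  obtain ⟨t, ht⟩ := exists_eq_of_sum_mul_pow_eq (hsum a b) (i₀ := .inr (.inl k))
    (fun h => hab (by simpa [weight] using congrArg re h)) fun t h => by
      obtain ⟨k', rfl, hk'⟩ := exists_inr_inl_of_node_eq hgam hphi hz h
      rw [hgaminj (hk'.trans (norm_node_inr_inl hgam k))]
  obtain ⟨j, -, hj⟩ := exists_inr_inl_of_node_eq hgam' hphi' hz ht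
  exact ⟨j, hj.trans (norm_node_inr_inl hgam k)⟩

end

end PhiMat

theorem stmt_8_general (m r s r' s' : ℕ)
    (lam : Fin r → ℝ) (gam phi : Fin s → ℝ)
    (G0 : Fin r → Matrix (Fin m) (Fin m) ℝ)
    (G1 G2 : Fin s → Matrix (Fin m) (Fin m) ℝ)
    (lam' : Fin r' → ℝ) (gam' phi' : Fin s' → ℝ)
    (G0' : Fin r' → Matrix (Fin m) (Fin m) ℝ)
    (G1' G2' : Fin s' → Matrix (Fin m) (Fin m) ℝ)
    (hgam0 : ∀ k, 0 < gam k)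
    (hphi : ∀ k, 0 < phi k ∧ phi k < Real.pi)
    (hgam0' : ∀ k, 0 < gam' k)
    (hphi' : ∀ k, 0 < phi' k ∧ phi' k < Real.pi)
    (hlaminj : Function.Injective lam) (hgaminj : Function.Injective gam)
    (hlaminj' : Function.Injective lam') (hgaminj' : Function.Injective gam')
    (hG0 : ∀ k, G0 k ≠ 0) (hG1 : ∀ k, G1 k ≠ 0)
    (hG0' : ∀ k, G0' k ≠ 0) (hG1' : ∀ k, G1' k ≠ 0)
    (heq : ∀ i : ℕ, 1 ≤ i →
      PhiMat m r s lam gam phi G0 G1 G2 i = PhiMat m r' s' lam' gam' phi' G0' G1' G2' i) :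
    r = r' ∧ s = s' := by
  have hsum := PhiMat.sum_weight_mul_node_pow_eq heq
  have hsum' := fun a b n => (hsum a b n).symm
  refine ⟨Fin.eq_of_range_eq hlaminj hlaminj' ?_, Fin.eq_of_range_eq hgaminj hgaminj' ?_⟩
  · exact (PhiMat.range_lam_subset hsum hgam0 hphi hgam0' hphi' hlaminj hG0).antisymm
      (PhiMat.range_lam_subset hsum' hgam0' hphi' hgam0 hphi hlaminj' hG0')
  · exact (PhiMat.range_gam_subset hsum hgam0 hphi hgam0' hphi' hgaminj hG1).antisymm
      (PhiMat.range_gam_subset hsum' hgam0' hphi' hgam0 hphi hgaminj' hG1')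

/-- identifiability of the order: if the two parameterizations give the
same coefficient matrices `Φ_i` for all `i ≥ 1`, then `r = r'` and `s = s'`. -/
theorem stmt_8 (m r s r' s' : ℕ) (hm : 0 < m)
    (lam : Fin r → ℝ) (gam phi : Fin s → ℝ)
    (G0 : Fin r → Matrix (Fin m) (Fin m) ℝ)
    (G1 G2 : Fin s → Matrix (Fin m) (Fin m) ℝ)
    (lam' : Fin r' → ℝ) (gam' phi' : Fin s' → ℝ)
    (G0' : Fin r' → Matrix (Fin m) (Fin m) ℝ)
    (G1' G2' : Fin s' → Matrix (Fin m) (Fin m) ℝ)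
    (hlam0 : ∀ k, 0 < |lam k|) (hlam1 : ∀ k, |lam k| < 1)
    (hgam0 : ∀ k, 0 < gam k) (hgam1 : ∀ k, gam k < 1)
    (hphi : ∀ k, 0 < phi k ∧ phi k < Real.pi)
    (hlam0' : ∀ k, 0 < |lam' k|) (hlam1' : ∀ k, |lam' k| < 1)
    (hgam0' : ∀ k, 0 < gam' k) (hgam1' : ∀ k, gam' k < 1)
    (hphi' : ∀ k, 0 < phi' k ∧ phi' k < Real.pi)
    (hlaminj : Function.Injective lam) (hgaminj : Function.Injective gam)
    (hlaminj' : Function.Injective lam') (hgaminj' : Function.Injective gam')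
    (hG0 : ∀ k, G0 k ≠ 0) (hG1 : ∀ k, G1 k ≠ 0) (hG2 : ∀ k, G2 k ≠ 0)
    (hG0' : ∀ k, G0' k ≠ 0) (hG1' : ∀ k, G1' k ≠ 0) (hG2' : ∀ k, G2' k ≠ 0)
    (heq : ∀ i : ℕ, 1 ≤ i →
      PhiMat m r s lam gam phi G0 G1 G2 i = PhiMat m r' s' lam' gam' phi' G0' G1' G2' i) :
    r = r' ∧ s = s' :=
  stmt_8_general m r s r' s' lam gam phi G0 G1 G2 lam' gam' phi' G0' G1' G2' hgam0 hphi hgam0' hphi'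
    hlaminj hgaminj hlaminj' hgaminj' hG0 hG1 hG0' hG1' heq
end

section
/- Let n be a positive integer and let A be an n×n real matrix all of whose entries are nonnegative. Assume that every element of the spectrum of A viewed as an n×n complex matrix (i.e., every complex eigenvalue of A) has modulus strictly less than 1. Then there exists a vector ν ∈ ℝ^n with all entries strictly positive such that every entry of the vector (I_n − Aᵀ) ν is strictly positive, where I_n is the n×n identity matrix and Aᵀ is the transpose of A. -/
open Filter Topology Finset Matrix
open scoped ENNReal NNReal

/-!
By Gelfand's formula, spectral radius `< 1` forces `Aᵏ → 0`, so for some `K` every column sum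
of `Aᴷ` is `< 1`. The truncated Neumann series `ν = ∑_{k<K} (Aᵀ)ᵏ 𝟙` is then `≥ 𝟙`, and the
geometric-sum identity gives `(1 - Aᵀ) ν = 𝟙 - (Aᵀ)ᴷ 𝟙 > 0`.
-/

theorem tendsto_pow_atTop_nhds_zero_of_spectralRadius_lt_one {A : Type*} [NormedRing A]
    [NormedAlgebra ℂ A] [CompleteSpace A] {a : A} (ha : spectralRadius ℂ a < 1) :
    Tendsto (a ^ ·) atTop (𝓝 0) := by
  obtain ⟨r, hρr, hr1⟩ := ENNReal.lt_iff_exists_nnreal_btwn.1 ha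
  have hbound : ∀ᶠ k : ℕ in atTop, ‖a ^ k‖ ≤ r ^ k := by
    filter_upwards [eventually_ge_atTop 1,
      (spectrum.pow_nnnorm_pow_one_div_tendsto_nhds_spectralRadius a).eventually_lt_const hρr]
      with k hk1 hk
    have hk0 : (0 : ℝ) < k := by exact_mod_cast hk1
    rw [← ENNReal.coe_rpow_of_nonneg _ (by positivity), ENNReal.coe_lt_coe, one_div,
      NNReal.rpow_inv_lt_iff hk0, NNReal.rpow_natCast] at hk
    exact_mod_cast hk.le
  exact squeeze_zero_norm' hbound
    (tendsto_pow_atTop_nhds_zero_of_lt_one r.2 (by exact_mod_cast hr1))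

namespace Matrix

variable {ι : Type*} [Fintype ι] [DecidableEq ι]

theorem tendsto_pow_atTop_nhds_zero_of_forall_norm_lt_one [Nonempty ι] (A : Matrix ι ι ℝ)
    (hA : ∀ μ ∈ spectrum ℂ (A.map (algebraMap ℝ ℂ)), ‖μ‖ < 1) :
    Tendsto (A ^ ·) atTop (𝓝 0) := by
  let := Matrix.linftyOpNormedRing (n := ι) (α := ℂ)
  let := Matrix.linftyOpNormedAlgebra (n := ι) (R := ℂ) (α := ℂ)
  have hρ : spectralRadius ℂ (A.map (algebraMap ℝ ℂ)) < 1 := by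
    simpa using spectrum.spectralRadius_lt_of_forall_lt _ (r := 1) fun μ hμ => by
      exact_mod_cast hA μ hμ
  have hlim := ((continuous_id'.matrix_map Complex.continuous_re).tendsto 0).comp
    (tendsto_pow_atTop_nhds_zero_of_spectralRadius_lt_one hρ)
  have hre_pow (k : ℕ) : (A.map (algebraMap ℝ ℂ) ^ k).map Complex.re = A ^ k := by
    rw [← Matrix.map_pow, Matrix.map_map]
    ext; simp
  simpa only [Function.comp_def, hre_pow, Matrix.map_zero _ Complex.zero_re] using hlim

variable {R : Type*} [CommRing R] [LinearOrder R] [IsStrictOrderedRing R]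

theorem exists_pos_one_sub_mulVec_pos {M : Matrix ι ι R} (hM : ∀ i j, 0 ≤ M i j) {K : ℕ}
    (hK : ∀ i, (M ^ K *ᵥ 1) i < 1) :
    ∃ ν : ι → R, (∀ i, 0 < ν i) ∧ ∀ i, 0 < ((1 - M) *ᵥ ν) i := by
  refine ⟨(∑ k ∈ range K, M ^ k) *ᵥ 1, fun i => ?_, fun i => ?_⟩
  · have hK0 : 0 < K := Nat.pos_of_ne_zero fun h => by simpa [h] using hK i
    rw [sum_mulVec, Finset.sum_apply]
    calc (0 : R) < (M ^ 0 *ᵥ 1) i := by simp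
      _ ≤ ∑ k ∈ range K, (M ^ k *ᵥ 1) i :=
        single_le_sum (fun k _ => sum_nonneg fun j _ =>
          mul_nonneg (pow_apply_nonneg hM k i j) zero_le_one) (mem_range.2 hK0)
  · rw [mulVec_mulVec, mul_neg_geom_sum, sub_mulVec]
    simpa using hK i

end Matrix

/-- if `A` is a nonnegative `n×n` real matrix whose complex spectrum lies
strictly inside the unit disc, then there is a strictly positive vector `ν` such that
`(I − Aᵀ) ν` is strictly positive. -/
theorem stmt_14 (n : ℕ) (hn : 0 < n) (A : Matrix (Fin n) (Fin n) ℝ)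
    (hA : ∀ i j, 0 ≤ A i j)
    (hspec : ∀ μ ∈ spectrum ℂ (A.map (algebraMap ℝ ℂ)), ‖μ‖ < 1) :
    ∃ ν : Fin n → ℝ, (∀ i, 0 < ν i) ∧
      ∀ i, 0 < ((1 - A.transpose).mulVec ν) i := by
  have : Nonempty (Fin n) := ⟨⟨0, hn⟩⟩
  have hlim : Tendsto (fun k => Aᵀ ^ k *ᵥ 1) atTop (𝓝 0) := by
    have := ((continuous_id'.matrix_transpose.matrix_mulVec
      (continuous_const (y := (1 : Fin n → ℝ)))).tendsto 0).comp
      (A.tendsto_pow_atTop_nhds_zero_of_forall_norm_lt_one hspec)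
    simpa [Function.comp_def, transpose_pow] using this
  obtain ⟨K, hK⟩ := (eventually_all.2 fun i =>
    (tendsto_pi_nhds.1 hlim i).eventually_lt_const zero_lt_one).exists
  exact Matrix.exists_pos_one_sub_mulVec_pos (fun i j => hA j i) hK
end
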